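/- For m ∈ ℕ, m ≥ 1, the even-degree singular value satisfies σ_{2m}² ≤ 4π²(2π²/3 + 1)/(2m+1), where σ_{2m}² = (16π³/(4m+1))((2π²/3)|P̃_{2m}^0(0)|² + 2∑_{j=1}^{m} |P̃_{2m}^{2j}(0)|²/(2j)²). -/

import Mathlib

/-! With `r k = (2k-1)‼/(2k)‼` one has `P̃_{2m}^{2j}(0)² = (4m+1)/(4π) · r(m-j) r(m+j)`, and
the Wallis bound `r k ² ≤ 1/(2k+1)` with AM-GM gives
`r(m-j) r(m+j) ≤ (1/(N-2j) + 1/(N+2j))/2`, `N = 2m+1`. Dividing by `(2j)²` and decomposing in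
partial fractions, everything reduces to
`∑_{j=1}^m (1/j² + (2/N)(1/(N-2j) + 1/(N+2j))) ≤ 2`, which follows from the telescoping bound
`1/j² ≤ 2/(2j-1) - 2/(2j+1)` and the crude bounds `1/(N-2j) ≤ 1/3` for `j < m` and
`1/(N+2j) ≤ 1/(2m+3)`. -/

open Real Finset

/-- The square `|P̃_n^j(0)|²` of the normalized associated Legendre function at zero,
for `n + j` even. -/
noncomputable def ptildeSq (n j : ℕ) : ℝ :=
  (2 * n + 1) / (4 * Real.pi) *
    ((Nat.doubleFactorial (n - j - 1) * Nat.doubleFactorial (n + j - 1) : ℝ) /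
      (Nat.doubleFactorial (n - j) * Nat.doubleFactorial (n + j) : ℝ))

/-- `(2k-1)‼/(2k)‼ = |P_{2k}(0)|`; at `k = 0` the truncated `2k - 1 = 0` gives `0‼ = 1`,
matching the convention `(-1)‼ = 1`. -/
noncomputable def wallisRatio (k : ℕ) : ℝ :=
  (Nat.doubleFactorial (2 * k - 1) : ℝ) / (Nat.doubleFactorial (2 * k) : ℝ)

lemma wallisRatio_succ (k : ℕ) :
    wallisRatio (k + 1) = wallisRatio k * ((2 * k + 1) / (2 * k + 2)) := by
  have hodd : Nat.doubleFactorial (2 * (k + 1) - 1)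
      = (2 * k + 1) * Nat.doubleFactorial (2 * k - 1) := by
    rw [show 2 * (k + 1) - 1 = 2 * k + 1 by omega, Nat.doubleFactorial_add_one]
  have heven : Nat.doubleFactorial (2 * (k + 1)) = (2 * k + 2) * Nat.doubleFactorial (2 * k) :=
    Nat.doubleFactorial_add_two (2 * k)
  have hodd_pos : (0 : ℝ) < Nat.doubleFactorial (2 * k - 1) := mod_cast Nat.doubleFactorial_pos _
  have heven_pos : (0 : ℝ) < Nat.doubleFactorial (2 * k) := mod_cast Nat.doubleFactorial_pos _
  simp only [wallisRatio, hodd, heven]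
  push_cast
  field_simp

lemma wallisRatio_sq_le (k : ℕ) : wallisRatio k ^ 2 ≤ 1 / (2 * k + 1 : ℝ) := by
  induction k with
  | zero => simp [wallisRatio]
  | succ k ih =>
    have hstep : (2 * k + 1 : ℝ) / (2 * k + 2) ^ 2 ≤ 1 / (2 * (k + 1 : ℕ) + 1) := by
      rw [div_le_div_iff₀ (by positivity) (by positivity)]
      push_cast
      nlinarith
    calc wallisRatio (k + 1) ^ 2 = wallisRatio k ^ 2 * ((2 * k + 1) / (2 * k + 2) : ℝ) ^ 2 := by
          rw [wallisRatio_succ, mul_pow]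
      _ ≤ 1 / (2 * k + 1) * ((2 * k + 1) / (2 * k + 2) : ℝ) ^ 2 := by gcongr
      _ = (2 * k + 1 : ℝ) / (2 * k + 2) ^ 2 := by field_simp
      _ ≤ 1 / (2 * (k + 1 : ℕ) + 1) := hstep

lemma ptildeSq_two_mul {m j : ℕ} (h : j ≤ m) :
    ptildeSq (2 * m) (2 * j)
      = (4 * m + 1) / (4 * π) * (wallisRatio (m - j) * wallisRatio (m + j)) := by
  rw [ptildeSq, wallisRatio, wallisRatio, show 2 * m - 2 * j = 2 * (m - j) by omega,
    show 2 * m + 2 * j = 2 * (m + j) by omega]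
  push_cast
  ring

lemma wallisRatio_mul_le {m j : ℕ} (h : j ≤ m) :
    wallisRatio (m - j) * wallisRatio (m + j)
      ≤ (1 / (2 * m + 1 - 2 * j) + 1 / (2 * m + 1 + 2 * j) : ℝ) / 2 := by
  have hsub := wallisRatio_sq_le (m - j)
  have hadd := wallisRatio_sq_le (m + j)
  rw [Nat.cast_sub h, show 2 * ((m : ℝ) - j) + 1 = 2 * m + 1 - 2 * j by ring] at hsub
  rw [Nat.cast_add, show 2 * ((m : ℝ) + j) + 1 = 2 * m + 1 + 2 * j by ring] at hadd
  linarith [two_mul_le_add_sq (wallisRatio (m - j)) (wallisRatio (m + j))]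

lemma sum_Icc_one_div_sq_le {m : ℕ} (hm : 1 ≤ m) :
    ∑ j ∈ Icc 1 m, 1 / (j : ℝ) ^ 2 ≤ 5 / 3 - 2 / (2 * m + 1 : ℝ) := by
  induction m, hm using Nat.le_induction with
  | base => norm_num
  | succ m hm ih =>
    rw [sum_Icc_succ_top (by omega)]
    have htelescope :
        1 / ((m + 1 : ℕ) : ℝ) ^ 2 ≤ 2 / (2 * m + 1) - 2 / (2 * (m + 1 : ℕ) + 1) := by
      push_cast
      rw [div_sub_div _ _ (by positivity) (by positivity),
        div_le_div_iff₀ (by positivity) (by positivity)]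
      nlinarith
    linarith

lemma sum_Icc_one_div_sub_le (m : ℕ) :
    ∑ j ∈ Icc 1 m, 1 / (2 * m + 1 - 2 * j : ℝ) ≤ (m + 2) / 3 := by
  rcases m with _ | n
  · norm_num
  rw [sum_Icc_succ_top (by omega)]
  have hlow : ∑ j ∈ Icc 1 n, 1 / (2 * (n + 1 : ℕ) + 1 - 2 * j : ℝ) ≤ n * (1 / 3) := by
    refine (sum_le_card_nsmul _ _ (1 / 3) fun j hj => ?_).trans_eq (by simp)
    have hj : (j : ℝ) ≤ n := mod_cast (mem_Icc.1 hj).2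
    rw [div_le_div_iff₀ (by push_cast; linarith) (by norm_num)]
    push_cast
    linarith
  rw [show 2 * ((n + 1 : ℕ) : ℝ) + 1 - 2 * ((n + 1 : ℕ) : ℝ) = 1 by ring]
  push_cast at hlow ⊢
  linarith

lemma sum_Icc_one_div_add_le (m : ℕ) :
    ∑ j ∈ Icc 1 m, 1 / (2 * m + 1 + 2 * j : ℝ) ≤ 1 / 2 := by
  have hterm : ∀ j ∈ Icc 1 m, 1 / (2 * m + 1 + 2 * j : ℝ) ≤ 1 / (2 * m + 3) := fun j hj => by
    have hj : (1 : ℝ) ≤ j := mod_cast (mem_Icc.1 hj).1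
    exact one_div_le_one_div_of_le (by positivity) (by linarith)
  calc _ ≤ m * (1 / (2 * m + 3 : ℝ)) := (sum_le_card_nsmul _ _ _ hterm).trans_eq (by simp)
    _ ≤ 1 / 2 := by
      rw [mul_one_div, div_le_div_iff₀ (by positivity) (by norm_num)]
      linarith

lemma sum_partialFractions_le {m : ℕ} (hm : 1 ≤ m) :
    ∑ j ∈ Icc 1 m, (1 / (j : ℝ) ^ 2 + 2 / (2 * m + 1)
      * (1 / (2 * m + 1 - 2 * j) + 1 / (2 * m + 1 + 2 * j))) ≤ 2 := by
  rw [sum_add_distrib, ← mul_sum, sum_add_distrib]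
  have hodd : ∑ j ∈ Icc 1 m, 1 / (2 * m + 1 - 2 * j : ℝ)
      + ∑ j ∈ Icc 1 m, 1 / (2 * m + 1 + 2 * j : ℝ) ≤ (m + 2) / 3 + 1 / 2 :=
    add_le_add (sum_Icc_one_div_sub_le m) (sum_Icc_one_div_add_le m)
  calc _ ≤ 5 / 3 - 2 / (2 * m + 1 : ℝ) + 2 / (2 * m + 1) * ((m + 2) / 3 + 1 / 2) :=
        add_le_add (sum_Icc_one_div_sq_le hm) (mul_le_mul_of_nonneg_left hodd (by positivity))
    _ = 2 := by field_simp; ring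

lemma sum_wallisRatio_mul_div_sq_le {m : ℕ} (hm : 1 ≤ m) :
    ∑ j ∈ Icc 1 m, wallisRatio (m - j) * wallisRatio (m + j) / (2 * j : ℝ) ^ 2
      ≤ 1 / (2 * (2 * m + 1) : ℝ) := by
  set N : ℝ := 2 * m + 1
  have hN : 0 < N := by positivity
  have hterm : ∀ j ∈ Icc 1 m, wallisRatio (m - j) * wallisRatio (m + j) / (2 * j : ℝ) ^ 2
      ≤ 1 / (4 * N) * (1 / (j : ℝ) ^ 2 + 2 / N * (1 / (N - 2 * j) + 1 / (N + 2 * j))) := by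
    intro j hj
    have hj1 : (1 : ℝ) ≤ j := mod_cast (mem_Icc.1 hj).1
    have hjm : (j : ℝ) ≤ m := mod_cast (mem_Icc.1 hj).2
    have hsub : N - 2 * j ≠ 0 := by linarith
    have hadd : N + 2 * j ≠ 0 := by linarith
    have hj0 : (j : ℝ) ≠ 0 := by linarith
    calc _ ≤ (1 / (N - 2 * j) + 1 / (N + 2 * j)) / 2 / (2 * j : ℝ) ^ 2 := by
          gcongr; exact wallisRatio_mul_le (mem_Icc.1 hj).2
      _ = _ := by field_simp; ring
  calc _ ≤ ∑ j ∈ Icc 1 m,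
          1 / (4 * N) * (1 / (j : ℝ) ^ 2 + 2 / N * (1 / (N - 2 * j) + 1 / (N + 2 * j))) :=
        sum_le_sum hterm
    _ ≤ 1 / (4 * N) * 2 := by rw [← mul_sum]; gcongr; exact sum_partialFractions_le hm
    _ = 1 / (2 * N) := by field_simp; ring

theorem sigmaSq_even_upper (m : ℕ) (hm : 1 ≤ m) :
    16 * Real.pi ^ 3 / (4 * (m : ℝ) + 1) *
        (2 * Real.pi ^ 2 / 3 * ptildeSq (2 * m) 0 +
          2 * ∑ j ∈ Finset.Icc 1 m, ptildeSq (2 * m) (2 * j) / (2 * (j : ℝ)) ^ 2) ≤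
      4 * Real.pi ^ 2 * (2 * Real.pi ^ 2 / 3 + 1) / (2 * (m : ℝ) + 1) := by
  have hcenter : ptildeSq (2 * m) 0 = (4 * m + 1) / (4 * π) * wallisRatio m ^ 2 := by
    simpa [sq] using ptildeSq_two_mul (Nat.zero_le m)
  have hsum : ∑ j ∈ Icc 1 m, ptildeSq (2 * m) (2 * j) / (2 * j : ℝ) ^ 2 = (4 * m + 1) / (4 * π)
      * ∑ j ∈ Icc 1 m, wallisRatio (m - j) * wallisRatio (m + j) / (2 * j : ℝ) ^ 2 := by
    rw [mul_sum]
    refine sum_congr rfl fun j hj => ?_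
    rw [ptildeSq_two_mul (mem_Icc.1 hj).2]
    ring
  rw [hcenter, hsum]
  calc _ = 4 * π ^ 2 * (2 * π ^ 2 / 3 * wallisRatio m ^ 2 + 2 * ∑ j ∈ Icc 1 m,
          wallisRatio (m - j) * wallisRatio (m + j) / (2 * j : ℝ) ^ 2) := by
        field_simp
        ring
    _ ≤ 4 * π ^ 2 * (2 * π ^ 2 / 3 * (1 / (2 * m + 1)) + 2 * (1 / (2 * (2 * m + 1)))) := by
        gcongr
        · exact wallisRatio_sq_le m
        · exact sum_wallisRatio_mul_div_sq_le hm
    _ = _ := by field_simp
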